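/- arXiv:1506.07331 — 4 statements merged into one kernel-verified Lean document; each statement's English description precedes it below -/
import Mathlib

section
/- Let H ∈ ℂ^{N×K}, N₀ > 0, P ∈ ℂ^{K×K} Hermitian, and set M := Hᴴ(N₀I + HHᴴ)⁻¹H − I and M̃ := P(I+M)P − P. Let G ∈ ℂ^{K×K} be Hermitian with I+G positive definite and R ∈ ℂ^{K×K} arbitrary, and set V_opt := (I + G + RP)Hᴴ(HHᴴ + N₀I)⁻¹. Then for every V ∈ ℂ^{K×N}, I_GMI(V,R,G) ≤ I_GMI(V_opt,R,G), and I_GMI(V_opt,R,G) = K + log det(I+G) + 2 Re Tr(PMR) + Tr(M(I+G)) + Tr((I+G)⁻¹ R M̃ Rᴴ). -/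
open Matrix
open scoped ComplexOrder

/-- The GMI of the channel-shortening demodulator with parameters `(V, R, G)`. -/
noncomputable def IGMI {N K : ℕ} (H : Matrix (Fin N) (Fin K) ℂ) (N₀ : ℝ)
    (P : Matrix (Fin K) (Fin K) ℂ) (V : Matrix (Fin K) (Fin N) ℂ)
    (R G : Matrix (Fin K) (Fin K) ℂ) : ℝ :=
  (Complex.log ((1 + G).det)).re - (Matrix.trace G).re
    + 2 * (Matrix.trace (V * H - R * P)).re
    - (Matrix.trace ((1 + G)⁻¹ * (V * ((N₀ : ℂ) • 1 + H * Hᴴ) * Vᴴ - V * H * P * Rᴴ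
        - R * P * Hᴴ * Vᴴ + R * P * Rᴴ))).re

/-! For fixed `R` and `G` the GMI is a concave quadratic function of `V`. Writing `Q = I + G` and
`S = N₀I + HHᴴ`, its `V`-dependent part is `2 Re Tr(Q⁻¹ (Q + RP)Hᴴ Vᴴ) − Re Tr(Q⁻¹ V S Vᴴ)`, and
`V_opt S = (Q + RP)Hᴴ`, so completing the square gives
`I_GMI(V_opt) − I_GMI(V) = Re Tr(Q⁻¹ (V − V_opt) S (V − V_opt)ᴴ)`, the trace of a product of two
positive semidefinite matrices, hence nonnegative. Taking `V = 0` there gives the optimal value,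
because `V_opt S V_optᴴ = (Q + RP)(I + M)(Q + RP)ᴴ`. -/

namespace Matrix

section General

variable {m n 𝕜 : Type*} [Fintype m] [Fintype n]

lemma PosSemidef.trace_mul_nonneg [RCLike 𝕜] {Q X : Matrix n n 𝕜} (hQ : Q.PosSemidef)
    (hX : X.PosSemidef) : 0 ≤ (Q * X).trace := by
  classical
  open scoped MatrixOrder in
  obtain ⟨B, rfl⟩ := CStarAlgebra.nonneg_iff_eq_star_mul_self.mp hQ.nonneg
  rw [star_eq_conjTranspose, Matrix.mul_assoc, trace_mul_comm]
  exact (hX.mul_mul_conjTranspose_same B).trace_nonneg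

lemma re_trace_conjTranspose (A : Matrix n n ℂ) : Aᴴ.trace.re = A.trace.re := by
  simp [trace_conjTranspose]

lemma re_trace_mul_mul_mul_conjTranspose_comm {Q : Matrix m m ℂ} {S : Matrix n n ℂ}
    (hQ : Q.IsHermitian) (hS : S.IsHermitian) (X Y : Matrix m n ℂ) :
    (Q * (X * S * Yᴴ)).trace.re = (Q * (Y * S * Xᴴ)).trace.re := by
  calc (Q * (X * S * Yᴴ)).trace.re = (Q * (X * S * Yᴴ))ᴴ.trace.re :=
        (re_trace_conjTranspose _).symm
    _ = (Y * S * Xᴴ * Q).trace.re := by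
      simp only [conjTranspose_mul, conjTranspose_conjTranspose, hQ.eq, hS.eq, Matrix.mul_assoc]
    _ = (Q * (Y * S * Xᴴ)).trace.re := by rw [trace_mul_comm]

lemma re_trace_completing_square {Q : Matrix m m ℂ} {S : Matrix n n ℂ}
    (hQ : Q.IsHermitian) (hS : S.IsHermitian) (V W : Matrix m n ℂ) :
    2 * (Q * (W * S * Vᴴ)).trace.re - (Q * (V * S * Vᴴ)).trace.re
      = (Q * (W * S * Wᴴ)).trace.re - (Q * ((V - W) * S * (V - W)ᴴ)).trace.re := by
  have hcross := re_trace_mul_mul_mul_conjTranspose_comm hQ hS V W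
  simp only [conjTranspose_sub, Matrix.mul_sub, Matrix.sub_mul, trace_sub, Complex.sub_re]
    at hcross ⊢
  linarith

lemma re_trace_inv_mul_add_mul_mul_conjTranspose [DecidableEq n] {Q P W : Matrix n n ℂ}
    (hQ : IsUnit Q.det) (hQh : Q.IsHermitian) (hP : P.IsHermitian) (hW : W.IsHermitian)
    (R : Matrix n n ℂ) :
    (Q⁻¹ * ((Q + R * P) * W * (Q + R * P)ᴴ)).trace.re
      = (W * Q).trace.re + 2 * (R * P * W).trace.re + (Q⁻¹ * R * (P * W * P) * Rᴴ).trace.re := by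
  have hcross := re_trace_mul_mul_mul_conjTranspose_comm isHermitian_one hP W R
  simp only [one_mul, hW.eq, Matrix.mul_assoc] at hcross
  have hcycle : (Q⁻¹ * (R * (P * (W * Q)))).trace = (R * (P * W)).trace := by
    calc _ = (Q * (Q⁻¹ * (R * (P * W)))).trace := by
          rw [trace_mul_comm Q]; simp only [Matrix.mul_assoc]
      _ = _ := by rw [mul_nonsing_inv_cancel_left _ _ hQ]
  rw [conjTranspose_add, conjTranspose_mul, hQh.eq, hP.eq]
  simp only [Matrix.add_mul, Matrix.mul_add, Matrix.mul_assoc, nonsing_inv_mul_cancel_left _ _ hQ,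
    trace_add, Complex.add_re, hcycle, hcross]
  ring

lemma posDef_smul_one_add_mul_conjTranspose [DecidableEq m] (H : Matrix m n ℂ) {N₀ : ℝ}
    (hN₀ : 0 < N₀) : ((N₀ : ℂ) • (1 : Matrix m m ℂ) + H * Hᴴ).PosDef :=
  (PosDef.one.smul (Complex.zero_lt_real.mpr hN₀)).add_posSemidef
    (posSemidef_self_mul_conjTranspose H)

end General

end Matrix

open Matrix

section IGMI

variable {N K : ℕ} {H : Matrix (Fin N) (Fin K) ℂ} {N₀ : ℝ} {P G R : Matrix (Fin K) (Fin K) ℂ}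

lemma IGMI_zero : IGMI H N₀ P 0 R G = (Complex.log (1 + G).det).re - G.trace.re
    - 2 * (R * P).trace.re - ((1 + G)⁻¹ * (R * P * Rᴴ)).trace.re := by
  simp only [IGMI, Matrix.zero_mul, zero_sub, trace_neg, Complex.neg_re, mul_neg,
    conjTranspose_zero, Matrix.mul_zero, zero_mul, sub_self, zero_add, sub_left_inj]
  ring

lemma IGMI_sub_IGMI_zero (hP : P.IsHermitian) (hG : G.IsHermitian) (hQ : IsUnit (1 + G).det)
    (V : Matrix (Fin K) (Fin N) ℂ) :
    IGMI H N₀ P V R G - IGMI H N₀ P 0 R G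
      = 2 * ((1 + G)⁻¹ * ((1 + G + R * P) * Hᴴ * Vᴴ)).trace.re
        - ((1 + G)⁻¹ * (V * ((N₀ : ℂ) • 1 + H * Hᴴ) * Vᴴ)).trace.re := by
  have hlin : (V * H).trace.re = (Hᴴ * Vᴴ).trace.re := by
    rw [← re_trace_conjTranspose, conjTranspose_mul]
  have hcross :=
    re_trace_mul_mul_mul_conjTranspose_comm (isHermitian_one.add hG).inv hP (V * H) R
  simp only [conjTranspose_mul, Matrix.mul_assoc] at hcross
  unfold IGMI
  set Q := 1 + G
  set S := (N₀ : ℂ) • 1 + H * Hᴴ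
  simp only [Matrix.mul_assoc, Matrix.mul_add, Matrix.add_mul, Matrix.mul_sub,
    nonsing_inv_mul_cancel_left _ _ hQ, trace_add, trace_sub, Complex.add_re, Complex.sub_re,
    conjTranspose_zero, Matrix.zero_mul, Matrix.mul_zero, sub_zero, zero_sub, trace_neg,
    trace_zero, Complex.neg_re, Complex.zero_re]
  linarith

lemma IGMI_sub_IGMI_eq {W : Matrix (Fin K) (Fin N) ℂ} (hP : P.IsHermitian) (hG : G.IsHermitian)
    (hQ : IsUnit (1 + G).det) (hW : W * ((N₀ : ℂ) • 1 + H * Hᴴ) = (1 + G + R * P) * Hᴴ)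
    (V : Matrix (Fin K) (Fin N) ℂ) :
    IGMI H N₀ P W R G - IGMI H N₀ P V R G
      = ((1 + G)⁻¹ * ((V - W) * ((N₀ : ℂ) • 1 + H * Hᴴ) * (V - W)ᴴ)).trace.re := by
  have hS : ((N₀ : ℂ) • 1 + H * Hᴴ).IsHermitian := by
    refine IsHermitian.add ?_ (isHermitian_mul_conjTranspose_self H)
    simp [IsHermitian, conjTranspose_smul]
  have hV : IGMI H N₀ P V R G - IGMI H N₀ P 0 R G = _ := IGMI_sub_IGMI_zero hP hG hQ V
  have hW0 : IGMI H N₀ P W R G - IGMI H N₀ P 0 R G = _ := IGMI_sub_IGMI_zero hP hG hQ W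
  rw [← hW, re_trace_completing_square (isHermitian_one.add hG).inv hS] at hV
  rw [← hW] at hW0
  linarith

end IGMI

/-- front-end-filter part of Proposition 3, Method II. The GMI is
maximized over `V` by `V_opt = (I + G + RP)Hᴴ(HHᴴ + N₀I)⁻¹`, with optimal value
`K + log det(I+G) + 2 Re Tr(PMR) + Tr(M(I+G)) + Tr((I+G)⁻¹ R M̃ Rᴴ)`. -/
theorem gmi_method2_frontend {N K : ℕ} (H : Matrix (Fin N) (Fin K) ℂ)
    (N₀ : ℝ) (hN₀ : 0 < N₀)
    (P : Matrix (Fin K) (Fin K) ℂ) (hP : P.IsHermitian)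
    (M : Matrix (Fin K) (Fin K) ℂ)
    (hM : M = Hᴴ * ((N₀ : ℂ) • 1 + H * Hᴴ)⁻¹ * H - 1)
    (Mt : Matrix (Fin K) (Fin K) ℂ) (hMt : Mt = P * (1 + M) * P - P)
    (G : Matrix (Fin K) (Fin K) ℂ) (hG : G.IsHermitian) (hpd : (1 + G).PosDef)
    (R : Matrix (Fin K) (Fin K) ℂ)
    (Vopt : Matrix (Fin K) (Fin N) ℂ)
    (hVopt : Vopt = (1 + G + R * P) * Hᴴ * (H * Hᴴ + (N₀ : ℂ) • 1)⁻¹) :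
    (∀ V : Matrix (Fin K) (Fin N) ℂ, IGMI H N₀ P V R G ≤ IGMI H N₀ P Vopt R G) ∧
      IGMI H N₀ P Vopt R G
        = K + (Complex.log ((1 + G).det)).re + 2 * (Matrix.trace (P * M * R)).re
          + (Matrix.trace (M * (1 + G))).re
          + (Matrix.trace ((1 + G)⁻¹ * R * Mt * Rᴴ)).re := by
  set S := (N₀ : ℂ) • 1 + H * Hᴴ
  have hS : S.PosDef := posDef_smul_one_add_mul_conjTranspose H hN₀
  have hQ : IsUnit (1 + G).det := (isUnit_iff_isUnit_det _).mp hpd.isUnit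
  have hVopt' : Vopt = (1 + G + R * P) * Hᴴ * S⁻¹ := by rw [hVopt, add_comm (H * Hᴴ)]
  have hVS : Vopt * S = (1 + G + R * P) * Hᴴ := by
    rw [hVopt', nonsing_inv_mul_cancel_right _ _ ((isUnit_iff_isUnit_det _).mp hS.isUnit)]
  have hW : (1 + M).IsHermitian := by
    rw [hM, add_sub_cancel]
    exact isHermitian_conjTranspose_mul_mul H hS.isHermitian.inv
  have hVSV : Vopt * S * Voptᴴ = (1 + G + R * P) * (1 + M) * (1 + G + R * P)ᴴ := by
    rw [hVS, hVopt', hM, add_sub_cancel]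
    simp only [conjTranspose_mul, conjTranspose_conjTranspose, hS.isHermitian.inv.eq,
      Matrix.mul_assoc]
  refine ⟨fun V => sub_nonneg.mp ?_, ?_⟩
  · rw [IGMI_sub_IGMI_eq hP hG hQ hVS V]
    exact (Complex.nonneg_iff.mp (hpd.inv.posSemidef.trace_mul_nonneg
      (hS.posSemidef.mul_mul_conjTranspose_same (V - Vopt)))).1
  · have hvalue := IGMI_sub_IGMI_eq hP hG hQ hVS 0
    simp only [zero_sub, conjTranspose_neg, Matrix.neg_mul, Matrix.mul_neg, neg_neg] at hvalue
    rw [hVSV, re_trace_inv_mul_add_mul_mul_conjTranspose hQ hpd.isHermitian hP hW R,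
      IGMI_zero] at hvalue
    rw [sub_eq_iff_eq_add.mp hvalue, hMt]
    simp only [Matrix.add_mul, Matrix.mul_add, Matrix.mul_sub, Matrix.sub_mul,
      Matrix.one_mul, Matrix.mul_one, Matrix.mul_assoc, trace_add, trace_sub, trace_one,
      Fintype.card_fin, Complex.add_re, Complex.sub_re, Complex.natCast_re, trace_mul_comm R]
    ring
end

section
/- Let K ≥ 1, let Q ∈ ℂ^{K×K} be Hermitian positive definite, M̃ ∈ ℂ^{K×K} Hermitian negative definite, and A ∈ ℂ^{K×K} arbitrary. Let 𝒮 ⊆ {0,…,K−1}² and define, for R ∈ ℂ^{K×K}, g(R) := 2 Re Tr(Aᴴ R) + Tr(Q R M̃ Rᴴ). Suppose R* vanishes at every position outside 𝒮 and the matrix Q R* M̃ + A vanishes at every position inside 𝒮. Then for every R ∈ ℂ^{K×K} vanishing at every position outside 𝒮, g(R) ≤ g(R*). -/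
/-!
Write `R = R* + D`. Since `Q` and `M̃` are Hermitian,
`g(R) = g(R*) + 2 Re Tr((Q R* M̃ + A)ᴴ D) + Re Tr(Q D M̃ Dᴴ)`.
The linear term vanishes because `Q R* M̃ + A` is zero on `𝒮` while `D` is supported on `𝒮`,
and the quadratic term is `-Re Tr(Q · D (-M̃) Dᴴ) ≤ 0`, the trace of a product of two positive
semidefinite matrices being nonnegative.
-/

open Matrix
open scoped ComplexOrder

namespace Matrix

variable {m n 𝕜 : Type*} [Fintype m] [Fintype n] [RCLike 𝕜]

lemma trace_conjTranspose_mul_eq_zero_of_support {α : Type*} [NonUnitalNonAssocSemiring α]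
    [StarRing α] {S : Set (m × n)} {B D : Matrix m n α}
    (hB : ∀ i j, (i, j) ∈ S → B i j = 0) (hD : ∀ i j, (i, j) ∉ S → D i j = 0) :
    (Bᴴ * D).trace = 0 := by
  refine Finset.sum_eq_zero fun j _ => Finset.sum_eq_zero fun i _ => ?_
  by_cases h : (i, j) ∈ S
  · simp [hB i j h]
  · simp [hD i j h]

open scoped MatrixOrder in
lemma PosSemidef.re_trace_mul_nonneg {P N : Matrix n n 𝕜} (hP : P.PosSemidef)
    (hN : N.PosSemidef) : 0 ≤ RCLike.re (P * N).trace := by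
  classical
  set B := CFC.sqrt P
  have hB : Bᴴ = B := (CFC.sqrt_nonneg P).posSemidef.isHermitian.eq
  have hcycle : (P * N).trace = (B * N * Bᴴ).trace := by
    rw [hB, ← CFC.sqrt_mul_sqrt_self P hP.nonneg, Matrix.mul_assoc, trace_mul_comm,
      Matrix.mul_assoc]
  rw [hcycle]
  exact (RCLike.nonneg_iff.mp (hN.mul_mul_conjTranspose_same B).trace_nonneg).1

lemma re_trace_mul_mul_mul_conjTranspose_nonpos {P : Matrix m m 𝕜} {M : Matrix n n 𝕜}
    (hP : P.PosSemidef) (hM : (-M).PosSemidef) (D : Matrix m n 𝕜) :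
    RCLike.re (P * D * M * Dᴴ).trace ≤ 0 := by
  have h := hP.re_trace_mul_nonneg (hM.mul_mul_conjTranspose_same D)
  rw [show P * (D * -M * Dᴴ) = -(P * D * M * Dᴴ) by
    simp only [Matrix.mul_neg, Matrix.neg_mul, Matrix.mul_assoc], trace_neg, map_neg] at h
  linarith

/-- The `R`-dependent part `g(R)` of the GMI, with `M` in the role of `M̃`. -/
def quadraticGain (Q : Matrix m m 𝕜) (M : Matrix n n 𝕜) (A R : Matrix m n 𝕜) : ℝ :=
  2 * RCLike.re (Aᴴ * R).trace + RCLike.re (Q * R * M * Rᴴ).trace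

lemma re_trace_cross_eq {Q : Matrix m m 𝕜} {M : Matrix n n 𝕜} (hQ : Q.IsHermitian)
    (hM : M.IsHermitian) (X D : Matrix m n 𝕜) :
    RCLike.re (Q * X * M * Dᴴ).trace + RCLike.re (Q * D * M * Xᴴ).trace
      = 2 * RCLike.re ((Q * X * M)ᴴ * D).trace := by
  have hc : ((Q * X * M)ᴴ * D).trace = (Q * D * M * Xᴴ).trace := by
    rw [show (Q * X * M)ᴴ * D = (M * Xᴴ) * (Q * D) by
          simp only [conjTranspose_mul, hQ.eq, hM.eq, Matrix.mul_assoc],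
      trace_mul_comm, ← Matrix.mul_assoc]
  have hconj : (Q * X * M * Dᴴ).trace = star (Q * D * M * Xᴴ).trace := by
    rw [← trace_conjTranspose, show (Q * D * M * Xᴴ)ᴴ = (X * M * Dᴴ) * Q by
          simp only [conjTranspose_mul, conjTranspose_conjTranspose, hQ.eq, hM.eq,
            Matrix.mul_assoc],
      trace_mul_comm (X * M * Dᴴ) Q]
    simp only [Matrix.mul_assoc]
  rw [hconj, hc, RCLike.star_def, RCLike.conj_re]
  ring

lemma quadraticGain_add {Q : Matrix m m 𝕜} {M : Matrix n n 𝕜} (hQ : Q.IsHermitian)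
    (hM : M.IsHermitian) (A X D : Matrix m n 𝕜) :
    quadraticGain Q M A (X + D) = quadraticGain Q M A X
      + 2 * RCLike.re ((Q * X * M + A)ᴴ * D).trace + RCLike.re (Q * D * M * Dᴴ).trace := by
  have hcross := re_trace_cross_eq hQ hM X D
  simp only [quadraticGain, conjTranspose_add, Matrix.mul_add, Matrix.add_mul, trace_add,
    map_add] at hcross ⊢
  linarith

theorem quadraticGain_le_of_stationary {Q : Matrix m m 𝕜} {M : Matrix n n 𝕜}
    {A Rstar R : Matrix m n 𝕜} {S : Set (m × n)} (hQ : Q.PosSemidef) (hM : (-M).PosSemidef)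
    (hsupp : ∀ i j, (i, j) ∉ S → Rstar i j = 0)
    (hstat : ∀ i j, (i, j) ∈ S → (Q * Rstar * M + A) i j = 0)
    (hR : ∀ i j, (i, j) ∉ S → R i j = 0) :
    quadraticGain Q M A R ≤ quadraticGain Q M A Rstar := by
  have hM_herm : M.IsHermitian := by simpa using hM.isHermitian.neg
  have horth : ((Q * Rstar * M + A)ᴴ * (R - Rstar)).trace = 0 :=
    trace_conjTranspose_mul_eq_zero_of_support hstat fun i j h => by
      simp [hR i j h, hsupp i j h]
  have hexpand := quadraticGain_add hQ.isHermitian hM_herm A Rstar (R - Rstar)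
  rw [add_sub_cancel, horth, map_zero, mul_zero, add_zero] at hexpand
  linarith [re_trace_mul_mul_mul_conjTranspose_nonpos hQ hM (R - Rstar)]

end Matrix

theorem method2_ic_max_general {K : ℕ}
    (Q Mt A : Matrix (Fin K) (Fin K) ℂ)
    (hQ : Q.PosDef) (hMt : (-Mt).PosDef)
    (S : Set (Fin K × Fin K))
    (Rstar : Matrix (Fin K) (Fin K) ℂ)
    (hsupp : ∀ k ℓ : Fin K, (k, ℓ) ∉ S → Rstar k ℓ = 0)
    (hstat : ∀ k ℓ : Fin K, (k, ℓ) ∈ S → (Q * Rstar * Mt + A) k ℓ = 0) :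
    ∀ R : Matrix (Fin K) (Fin K) ℂ, (∀ k ℓ : Fin K, (k, ℓ) ∉ S → R k ℓ = 0) →
      2 * (Matrix.trace (Aᴴ * R)).re + (Matrix.trace (Q * R * Mt * Rᴴ)).re
        ≤ 2 * (Matrix.trace (Aᴴ * Rstar)).re
          + (Matrix.trace (Q * Rstar * Mt * Rstarᴴ)).re :=
  fun _ hR => quadraticGain_le_of_stationary hQ.posSemidef hMt.posSemidef hsupp hstat hR

/-- interference-cancelation part of Proposition 3, Method II. Let `Q` be
Hermitian positive definite, `M̃` Hermitian negative definite, `A` arbitrary, and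
`g(R) = 2 Re Tr(Aᴴ R) + Tr(Q R M̃ Rᴴ)`. If `R*` is supported on `𝒮` and `Q R* M̃ + A`
vanishes on `𝒮`, then `R*` maximizes `g` over matrices supported on `𝒮`. -/
theorem method2_ic_max {K : ℕ} (hK : 1 ≤ K)
    (Q Mt A : Matrix (Fin K) (Fin K) ℂ)
    (hQ : Q.PosDef) (hMt : (-Mt).PosDef)
    (S : Set (Fin K × Fin K))
    (Rstar : Matrix (Fin K) (Fin K) ℂ)
    (hsupp : ∀ k ℓ : Fin K, (k, ℓ) ∉ S → Rstar k ℓ = 0)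
    (hstat : ∀ k ℓ : Fin K, (k, ℓ) ∈ S → (Q * Rstar * Mt + A) k ℓ = 0) :
    ∀ R : Matrix (Fin K) (Fin K) ℂ, (∀ k ℓ : Fin K, (k, ℓ) ∉ S → R k ℓ = 0) →
      2 * (Matrix.trace (Aᴴ * R)).re + (Matrix.trace (Q * R * Mt * Rᴴ)).re
        ≤ 2 * (Matrix.trace (Aᴴ * Rstar)).re
          + (Matrix.trace (Q * Rstar * Mt * Rstarᴴ)).re :=
  method2_ic_max_general Q Mt A hQ hMt S Rstar hsupp hstat
end

section
/- Let H, R : [−π, π] → ℂ and G : [−π, π] → ℝ be continuous with 1 + G(ω) > 0 for all ω, let α ∈ [0, 1] and N₀ > 0, and define M(ω) := |H(ω)|²/(N₀+|H(ω)|²) − 1 and M̃(ω) := α²(M(ω)+1) − α. For continuous V : [−π, π] → ℂ define Ī(V) := (1/2π)∫_{−π}^{π} [log(1+G(ω)) − G(ω) − L₂(ω)/(1+G(ω))] dω + (1/π)∫_{−π}^{π} Re{V(ω)H(ω) − αR(ω)} dω, where L₂(ω) := |V(ω)|²(N₀+|H(ω)|²) + α|R(ω)|² − 2α Re{H(ω)V(ω)R*(ω)}.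 Set V_opt(ω) := H*(ω)(1 + G(ω) + αR(ω))/(N₀ + |H(ω)|²). Then for every continuous V, Ī(V) ≤ Ī(V_opt), and Ī(V_opt) = 1 + (α/π)∫_{−π}^{π} Re{M(ω)R(ω)} dω + (1/2π)∫_{−π}^{π} [log(1+G(ω)) + M̃(ω)|R(ω)|²/(1+G(ω)) + M(ω)(1+G(ω))] dω. -/
/-!
Completing the square in `V(ω)`: pointwise, the integrand of `Ī` equals its value at `V_opt(ω)`
minus `(N₀ + |H(ω)|²) |V(ω) - V_opt(ω)|² / (1 + G(ω))`, so `Ī(V_opt) - Ī(V)` is the integral of a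
non-negative function. The optimal value is the integrand at the vertex, where
`(N₀ + |H|²) |V_opt|² = |H|² |1 + G + αR|² / (N₀ + |H|²)` regroups into the `M`, `M̃` form.
-/

open Matrix
open scoped ComplexOrder

/-- The integrand of `2π · Ī(V)` at one frequency, in terms of the values `h = H(ω)`, `r = R(ω)`,
`g = G(ω)` and `v = V(ω)`. -/
noncomputable def rateDensity (N₀ α : ℝ) (h r : ℂ) (g : ℝ) (v : ℂ) : ℝ :=
  Real.log (1 + g) - g
    - (‖v‖ ^ 2 * (N₀ + ‖h‖ ^ 2) + α * ‖r‖ ^ 2 - 2 * α * (h * v * star r).re) / (1 + g)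
    + 2 * (v * h - (α : ℂ) * r).re

noncomputable def optimalFrontEnd (N₀ α : ℝ) (h r : ℂ) (g : ℝ) : ℂ :=
  star h * (((1 + g : ℝ) : ℂ) + (α : ℂ) * r) / ((N₀ + ‖h‖ ^ 2 : ℝ) : ℂ)

section Pointwise

variable {N₀ α g : ℝ} {h r : ℂ}

lemma two_mul_re_mul_star_sub_sq_norm (v w : ℂ) :
    2 * (v * star w).re - ‖v‖ ^ 2 = ‖w‖ ^ 2 - ‖v - w‖ ^ 2 := by
  rw [Complex.sq_norm, Complex.sq_norm, Complex.sq_norm, Complex.normSq_sub]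
  simp only [Complex.star_def]
  ring

lemma mul_star_optimalFrontEnd (hS : N₀ + ‖h‖ ^ 2 ≠ 0) :
    ((N₀ + ‖h‖ ^ 2 : ℝ) : ℂ) * star (optimalFrontEnd N₀ α h r g)
      = h * (((1 + g : ℝ) : ℂ) + α * star r) := by
  have hS' : ((N₀ + ‖h‖ ^ 2 : ℝ) : ℂ) ≠ 0 := by exact_mod_cast hS
  simp only [optimalFrontEnd, star_div₀, star_mul', star_add, Complex.star_def,
    Complex.conj_ofReal, Complex.conj_conj]
  field_simp

lemma re_mul_star_optimalFrontEnd (hS : N₀ + ‖h‖ ^ 2 ≠ 0) (v : ℂ) :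
    (N₀ + ‖h‖ ^ 2) * (v * star (optimalFrontEnd N₀ α h r g)).re
      = (1 + g) * (h * v).re + α * (h * v * star r).re := by
  rw [← Complex.re_ofReal_mul, mul_left_comm, mul_star_optimalFrontEnd hS,
    show v * (h * (((1 + g : ℝ) : ℂ) + α * star r))
      = ((1 + g : ℝ) : ℂ) * (h * v) + (α : ℂ) * (h * v * star r) by ring,
    Complex.add_re, Complex.re_ofReal_mul, Complex.re_ofReal_mul]

lemma rateDensity_eq (hg : 1 + g ≠ 0) (hS : N₀ + ‖h‖ ^ 2 ≠ 0) (v : ℂ) :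
    rateDensity N₀ α h r g v
      = Real.log (1 + g) - g - α * ‖r‖ ^ 2 / (1 + g) - 2 * α * r.re
        + (N₀ + ‖h‖ ^ 2) * (‖optimalFrontEnd N₀ α h r g‖ ^ 2
            - ‖v - optimalFrontEnd N₀ α h r g‖ ^ 2) / (1 + g) := by
  rw [← two_mul_re_mul_star_sub_sq_norm, rateDensity]
  have hre := re_mul_star_optimalFrontEnd (α := α) (r := r) (g := g) hS v
  field_simp
  rw [Complex.sub_re, Complex.re_ofReal_mul]
  linear_combination -2 * hre

lemma rateDensity_le_optimalFrontEnd (hg : 0 < 1 + g) (hS : 0 < N₀ + ‖h‖ ^ 2) (v : ℂ) :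
    rateDensity N₀ α h r g v ≤ rateDensity N₀ α h r g (optimalFrontEnd N₀ α h r g) := by
  rw [rateDensity_eq hg.ne' hS.ne', rateDensity_eq hg.ne' hS.ne' (optimalFrontEnd _ _ _ _ _),
    sub_self, norm_zero]
  have hS₀ := hS.le
  gcongr
  simp

lemma sq_norm_optimalFrontEnd :
    ‖optimalFrontEnd N₀ α h r g‖ ^ 2
      = ‖h‖ ^ 2 * ((1 + g) ^ 2 + 2 * α * (1 + g) * r.re + α ^ 2 * ‖r‖ ^ 2)
        / (N₀ + ‖h‖ ^ 2) ^ 2 := by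
  rw [optimalFrontEnd, norm_div, norm_mul, norm_star, Complex.norm_real, Real.norm_eq_abs,
    div_pow, mul_pow, sq_abs, Complex.sq_norm (_ + _), Complex.sq_norm r, Complex.normSq_apply,
    Complex.normSq_apply]
  simp only [Complex.add_re, Complex.add_im, Complex.mul_re, Complex.mul_im, Complex.ofReal_re,
    Complex.ofReal_im]
  ring

lemma rateDensity_optimalFrontEnd (hg : 1 + g ≠ 0) (hS : N₀ + ‖h‖ ^ 2 ≠ 0) {m mt : ℝ}
    (hm : m = ‖h‖ ^ 2 / (N₀ + ‖h‖ ^ 2) - 1) (hmt : mt = α ^ 2 * (m + 1) - α) :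
    rateDensity N₀ α h r g (optimalFrontEnd N₀ α h r g)
      = 1 + 2 * α * ((m : ℂ) * r).re
        + (Real.log (1 + g) + mt * ‖r‖ ^ 2 / (1 + g) + m * (1 + g)) := by
  rw [rateDensity_eq hg hS, sub_self, norm_zero, sq_norm_optimalFrontEnd, Complex.re_ofReal_mul,
    hmt, hm]
  field_simp
  ring

end Pointwise

lemma ContinuousOn.rateDensity {s : Set ℝ} {H R V : ℝ → ℂ} {G : ℝ → ℝ} (N₀ α : ℝ)
    (hH : ContinuousOn H s) (hR : ContinuousOn R s) (hG : ContinuousOn G s)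
    (hV : ContinuousOn V s) (hg : ∀ ω ∈ s, 1 + G ω ≠ 0) :
    ContinuousOn (fun ω => rateDensity N₀ α (H ω) (R ω) (G ω) (V ω)) s := by
  unfold _root_.rateDensity
  fun_prop (disch := assumption)

lemma ContinuousOn.optimalFrontEnd {s : Set ℝ} {H R : ℝ → ℂ} {G : ℝ → ℝ} (N₀ α : ℝ)
    (hH : ContinuousOn H s) (hR : ContinuousOn R s) (hG : ContinuousOn G s)
    (hS : ∀ ω ∈ s, N₀ + ‖H ω‖ ^ 2 ≠ 0) :
    ContinuousOn (fun ω => optimalFrontEnd N₀ α (H ω) (R ω) (G ω)) s := by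
  have hS' : ∀ ω ∈ s, ((N₀ + ‖H ω‖ ^ 2 : ℝ) : ℂ) ≠ 0 :=
    fun ω hω => Complex.ofReal_ne_zero.mpr (hS ω hω)
  unfold _root_.optimalFrontEnd
  fun_prop (disch := assumption)

theorem isi_method2_frontend_general
    (H R : ℝ → ℂ) (G : ℝ → ℝ)
    (hHc : ContinuousOn H (Set.Icc (-Real.pi) Real.pi))
    (hRc : ContinuousOn R (Set.Icc (-Real.pi) Real.pi))
    (hGc : ContinuousOn G (Set.Icc (-Real.pi) Real.pi))
    (hGpos : ∀ ω ∈ Set.Icc (-Real.pi) Real.pi, 0 < 1 + G ω)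
    (α : ℝ) (N₀ : ℝ) (hN₀ : 0 < N₀)
    (M Mt : ℝ → ℝ)
    (hM : ∀ ω, M ω = ‖H ω‖ ^ 2 / (N₀ + ‖H ω‖ ^ 2) - 1)
    (hMt : ∀ ω, Mt ω = α ^ 2 * (M ω + 1) - α)
    (L₂ : (ℝ → ℂ) → ℝ → ℝ)
    (hL₂ : ∀ (V : ℝ → ℂ) (ω : ℝ), L₂ V ω = ‖V ω‖ ^ 2 * (N₀ + ‖H ω‖ ^ 2)
      + α * ‖R ω‖ ^ 2 - 2 * α * (H ω * V ω * star (R ω)).re)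
    (Ibar : (ℝ → ℂ) → ℝ)
    (hIbar : ∀ V : ℝ → ℂ, Ibar V =
      (1 / (2 * Real.pi)) * (∫ ω in (-Real.pi)..Real.pi,
          (Real.log (1 + G ω) - G ω - L₂ V ω / (1 + G ω)))
        + (1 / Real.pi) * ∫ ω in (-Real.pi)..Real.pi, (V ω * H ω - (α : ℂ) * R ω).re)
    (Vopt : ℝ → ℂ)
    (hVopt : ∀ ω, Vopt ω = star (H ω) * (((1 + G ω : ℝ) : ℂ) + (α : ℂ) * R ω)
      / ((N₀ + ‖H ω‖ ^ 2 : ℝ) : ℂ)) :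
    (∀ V : ℝ → ℂ, ContinuousOn V (Set.Icc (-Real.pi) Real.pi) → Ibar V ≤ Ibar Vopt) ∧
      Ibar Vopt = 1 + (α / Real.pi) * (∫ ω in (-Real.pi)..Real.pi, ((M ω : ℂ) * R ω).re)
        + (1 / (2 * Real.pi)) * ∫ ω in (-Real.pi)..Real.pi,
            (Real.log (1 + G ω) + Mt ω * ‖R ω‖ ^ 2 / (1 + G ω) + M ω * (1 + G ω)) := by
  have hI : Set.uIcc (-Real.pi) Real.pi = Set.Icc (-Real.pi) Real.pi :=
    Set.uIcc_of_le (by linarith [Real.pi_pos])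
  rw [← hI] at hHc hRc hGc hGpos
  have hg : ∀ ω ∈ Set.uIcc (-Real.pi) Real.pi, 1 + G ω ≠ 0 := fun ω hω => (hGpos ω hω).ne'
  have hS : ∀ ω, 0 < N₀ + ‖H ω‖ ^ 2 := fun ω => by positivity
  have hSne : ∀ ω ∈ Set.uIcc (-Real.pi) Real.pi, N₀ + ‖H ω‖ ^ 2 ≠ 0 := fun ω _ => (hS ω).ne'
  obtain rfl : Vopt = fun ω => optimalFrontEnd N₀ α (H ω) (R ω) (G ω) := funext hVopt
  have hVoptc := hHc.optimalFrontEnd N₀ α hRc hGc hSne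
  have hIbar' : ∀ V, ContinuousOn V (Set.uIcc (-Real.pi) Real.pi) → Ibar V =
      1 / (2 * Real.pi) * ∫ ω in (-Real.pi)..Real.pi, rateDensity N₀ α (H ω) (R ω) (G ω) (V ω) := by
    intro V hV
    simp only [hIbar, hL₂]
    rw [show 1 / Real.pi = 1 / (2 * Real.pi) * 2 by ring, mul_assoc, ← mul_add,
      ← intervalIntegral.integral_const_mul, ← intervalIntegral.integral_add]
    · rfl
    · exact ContinuousOn.intervalIntegrable (by fun_prop (disch := assumption))
    · exact ContinuousOn.intervalIntegrable (by fun_prop)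
  refine ⟨fun V hV => ?_, ?_⟩
  · rw [hIbar' V (hI ▸ hV), hIbar' _ hVoptc]
    gcongr
    refine intervalIntegral.integral_mono_on (by linarith [Real.pi_pos]) ?_ ?_ fun ω hω => ?_
    · exact (hHc.rateDensity N₀ α hRc hGc (hI ▸ hV) hg).intervalIntegrable
    · exact (hHc.rateDensity N₀ α hRc hGc hVoptc hg).intervalIntegrable
    · exact rateDensity_le_optimalFrontEnd (hGpos ω (hI ▸ hω)) (hS ω) _
  · obtain rfl : M = _ := funext hM
    obtain rfl : Mt = _ := funext hMt
    rw [hIbar' _ hVoptc, intervalIntegral.integral_congr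
      (fun ω hω => rateDensity_optimalFrontEnd (hg ω hω) (hS ω).ne' rfl rfl),
      intervalIntegral.integral_add, intervalIntegral.integral_add, intervalIntegral.integral_const,
      intervalIntegral.integral_const_mul]
    · field_simp
      ring
    all_goals exact ContinuousOn.intervalIntegrable (by fun_prop (disch := assumption))

/-- front-end-filter part of Proposition 7, Method II for ISI channels.
The asymptotic rate `Ī(V)` is maximized over continuous front-end spectra `V` by
`V_opt(ω) = H*(ω)(1 + G(ω) + αR(ω))/(N₀ + |H(ω)|²)`, with the stated optimal value. -/
theorem isi_method2_frontend
    (H R : ℝ → ℂ) (G : ℝ → ℝ)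
    (hHc : ContinuousOn H (Set.Icc (-Real.pi) Real.pi))
    (hRc : ContinuousOn R (Set.Icc (-Real.pi) Real.pi))
    (hGc : ContinuousOn G (Set.Icc (-Real.pi) Real.pi))
    (hGpos : ∀ ω ∈ Set.Icc (-Real.pi) Real.pi, 0 < 1 + G ω)
    (α : ℝ) (hα : 0 ≤ α ∧ α ≤ 1) (N₀ : ℝ) (hN₀ : 0 < N₀)
    (M Mt : ℝ → ℝ)
    (hM : ∀ ω, M ω = ‖H ω‖ ^ 2 / (N₀ + ‖H ω‖ ^ 2) - 1)
    (hMt : ∀ ω, Mt ω = α ^ 2 * (M ω + 1) - α)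
    (L₂ : (ℝ → ℂ) → ℝ → ℝ)
    (hL₂ : ∀ (V : ℝ → ℂ) (ω : ℝ), L₂ V ω = ‖V ω‖ ^ 2 * (N₀ + ‖H ω‖ ^ 2)
      + α * ‖R ω‖ ^ 2 - 2 * α * (H ω * V ω * star (R ω)).re)
    (Ibar : (ℝ → ℂ) → ℝ)
    (hIbar : ∀ V : ℝ → ℂ, Ibar V =
      (1 / (2 * Real.pi)) * (∫ ω in (-Real.pi)..Real.pi,
          (Real.log (1 + G ω) - G ω - L₂ V ω / (1 + G ω)))
        + (1 / Real.pi) * ∫ ω in (-Real.pi)..Real.pi, (V ω * H ω - (α : ℂ) * R ω).re)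
    (Vopt : ℝ → ℂ)
    (hVopt : ∀ ω, Vopt ω = star (H ω) * (((1 + G ω : ℝ) : ℂ) + (α : ℂ) * R ω)
      / ((N₀ + ‖H ω‖ ^ 2 : ℝ) : ℂ)) :
    (∀ V : ℝ → ℂ, ContinuousOn V (Set.Icc (-Real.pi) Real.pi) → Ibar V ≤ Ibar Vopt) ∧
      Ibar Vopt = 1 + (α / Real.pi) * (∫ ω in (-Real.pi)..Real.pi, ((M ω : ℂ) * R ω).re)
        + (1 / (2 * Real.pi)) * ∫ ω in (-Real.pi)..Real.pi,
            (Real.log (1 + G ω) + Mt ω * ‖R ω‖ ^ 2 / (1 + G ω) + M ω * (1 + G ω)) :=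
  isi_method2_frontend_general H R G hHc hRc hGc hGpos α N₀ hN₀ M Mt hM hMt L₂ hL₂ Ibar hIbar Vopt
    hVopt
end

section
/- Let H ∈ ℂ^{N×K} with HᴴH invertible, let P be a real diagonal K×K matrix with 0 < P(k,k) < 1 for all k and P ≠ 0, let ν ≥ 0, and let 𝒮 ⊆ {0,…,K−1}² contain no diagonal position (k,k). For each N₀ > 0 set M(N₀) := Hᴴ(N₀I + HHᴴ)⁻¹H − I and M̃(N₀) := P(I+M(N₀))P − P, let G(N₀) be a Hermitian matrix banded within diagonals [−ν, ν] with I+G(N₀) positive definite satisfying [(I+G(N₀))⁻¹]_ν = −[M(N₀)]_ν, and define δ₂(N₀) := sup{ 2 Re Tr(P M(N₀) R) + Tr((I+G(N₀))⁻¹ R M̃(N₀) Rᴴ) : R ∈ ℂ^{K×K} vanishing at every position outside 𝒮 }. Then δ₂(N₀) ≥ 0 for all N₀ > 0, and δ₂(N₀) = O(N₀) as N₀ → 0⁺, while δ₂(N₀) = O(1/N₀²) as N₀ → ∞. -/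
open Matrix Filter Asymptotics
open scoped ComplexOrder Topology

/-- `[A]_ν`: the matrix agreeing with `A` on the diagonals `|k − ℓ| ≤ ν` and zero elsewhere. -/
def bandPart {K : ℕ} (ν : ℕ) (A : Matrix (Fin K) (Fin K) ℂ) : Matrix (Fin K) (Fin K) ℂ :=
  Matrix.of fun k ℓ => if |((k : ℕ) : ℤ) - ((ℓ : ℕ) : ℤ)| ≤ (ν : ℤ) then A k ℓ else 0

/-!
Write `T = Hᴴ H`. By the push-through identity, `M(N₀) = -E(N₀)` with `E(N₀) = N₀ (N₀ + T)⁻¹`;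
hence `E ≥ N₀ / (N₀ + ‖T‖)`, `‖E‖ ≤ N₀ ‖T⁻¹‖`, and off the diagonal `E` agrees with
`-(N₀ + T)⁻¹ T`, whose norm is at most `‖T‖ / N₀`.

Since `I + G` is banded, `Tr((I + G) E)` only sees the band of `E`, where `E` agrees with
`(I + G)⁻¹`; hence `Tr((I + G) E) = K`, so `Tr(I + G) ≤ K (N₀ + ‖T‖) / N₀`, and
`(I + G)⁻¹ ≥ α` with `α = N₀ / (K (N₀ + ‖T‖))`. Moreover `-M̃ = P - P² + P E P ≥ c₀` with
`c₀ = min p (1 - p)`. The objective is therefore at most `2 Re Tr(P M R) - α c₀ ‖R‖_F²`, and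
as `R` vanishes on the diagonal only the off-diagonal entries of `P M` enter; by AM-GM the
supremum is at most `K² b² / (α c₀)` for any bound `b` on those entries. Taking
`b = N₀ ‖T⁻¹‖` as `N₀ → 0` and `b = ‖T‖ / N₀` as `N₀ → ∞` gives the two rates, and `R = 0`
gives `δ₂ ≥ 0`.
-/

lemma Finite.exists_pos_le_sub_sq {ι : Type*} [Finite ι] [Nonempty ι] {p : ι → ℝ}
    (hp : ∀ k, 0 < p k ∧ p k < 1) : ∃ c₀ > 0, ∀ k, c₀ ≤ p k - p k ^ 2 := by
  obtain ⟨k₀, hk₀⟩ := Finite.exists_min fun k => p k - p k ^ 2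
  exact ⟨_, by nlinarith [hp k₀], hk₀⟩

namespace Matrix

section Trace
open scoped MatrixOrder
variable {n : Type*} [Fintype n]

lemma re_trace_conjTranspose_mul_self (R : Matrix n n ℂ) :
    (Rᴴ * R).trace.re = ∑ k, ∑ ℓ, ‖R ℓ k‖ ^ 2 := by
  simp only [trace, diag, mul_apply, conjTranspose_apply, Complex.re_sum]
  refine Finset.sum_congr rfl fun k _ => Finset.sum_congr rfl fun ℓ _ => ?_
  rw [Complex.star_def, ← Complex.normSq_eq_conj_mul_self, Complex.ofReal_re,
    Complex.normSq_eq_norm_sq]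

lemma two_mul_re_trace_mul_le {B R : Matrix n n ℂ} {b γ : ℝ} (hγ : 0 < γ)
    (hB : ∀ k ℓ, k ≠ ℓ → ‖B k ℓ‖ ≤ b) (hR : ∀ k, R k k = 0) :
    2 * (B * R).trace.re ≤ γ * (Rᴴ * R).trace.re + Fintype.card n ^ 2 * b ^ 2 / γ := by
  have amgm (x : ℝ) : 2 * (b * x) ≤ γ * x ^ 2 + b ^ 2 / γ := by
    rw [add_div' _ _ _ hγ.ne', le_div_iff₀ hγ]
    nlinarith [sq_nonneg (γ * x - b)]
  have hterm : ∀ k ℓ, 2 * (B k ℓ * R ℓ k).re ≤ γ * ‖R ℓ k‖ ^ 2 + b ^ 2 / γ := by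
    intro k ℓ
    rcases eq_or_ne k ℓ with rfl | hkl
    · rw [hR k]; simp; positivity
    calc 2 * (B k ℓ * R ℓ k).re ≤ 2 * (‖B k ℓ‖ * ‖R ℓ k‖) := by
          gcongr; exact (Complex.re_le_norm _).trans (norm_mul _ _).le
      _ ≤ 2 * (b * ‖R ℓ k‖) := by gcongr; exact hB k ℓ hkl
      _ ≤ _ := amgm _
  calc 2 * (B * R).trace.re = ∑ k, ∑ ℓ, 2 * (B k ℓ * R ℓ k).re := by
        simp only [trace, diag, mul_apply, Complex.re_sum, Finset.mul_sum]
    _ ≤ ∑ k, ∑ ℓ, (γ * ‖R ℓ k‖ ^ 2 + b ^ 2 / γ) := by gcongr with k _ ℓ _; exact hterm k ℓ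
    _ = _ := by
        simp only [re_trace_conjTranspose_mul_self, Finset.sum_add_distrib, Finset.mul_sum,
          Finset.sum_const, Finset.card_univ, nsmul_eq_mul]
        ring

lemma trace_mul_nonneg {A B : Matrix n n ℂ} (hA : 0 ≤ A) (hB : 0 ≤ B) :
    0 ≤ (A * B).trace := by
  classical
  have hs : IsSelfAdjoint (CFC.sqrt A) := (CFC.sqrt_nonneg A).isSelfAdjoint
  have := ((nonneg_iff_posSemidef.mp hB).mul_mul_conjTranspose_same (CFC.sqrt A)).trace_nonneg
  rw [← star_eq_conjTranspose, hs.star_eq, mul_assoc] at this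
  rwa [← CFC.sqrt_mul_sqrt_self A, mul_assoc, trace_mul_comm, mul_assoc]

lemma re_trace_mul_le_of_le {A X Y : Matrix n n ℂ} (hA : 0 ≤ A) (h : X ≤ Y) :
    (A * X).trace.re ≤ (A * Y).trace.re := by
  have := (Complex.le_def.mp (trace_mul_nonneg hA (sub_nonneg.mpr h))).1
  simpa [Matrix.mul_sub, trace_sub] using this

lemma PosSemidef.le_trace_smul_one [DecidableEq n] {A : Matrix n n ℂ} (hA : A.PosSemidef) :
    A ≤ A.trace.re • (1 : Matrix n n ℂ) := by
  rw [← Algebra.algebraMap_eq_smul_one]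
  refine le_algebraMap_of_spectrum_le (fun x hx => ?_) hA.isHermitian.isSelfAdjoint
  rw [hA.isHermitian.spectrum_real_eq_range_eigenvalues] at hx
  obtain ⟨i, rfl⟩ := hx
  rw [hA.isHermitian.trace_eq_sum_eigenvalues]
  simp only [Complex.re_sum]
  exact Finset.single_le_sum (fun j _ => hA.eigenvalues_nonneg j) (Finset.mem_univ i)

end Trace

section OperatorNorm
open scoped MatrixOrder Matrix.Norms.L2Operator

variable {n : Type*} [Fintype n] [DecidableEq n]

lemma norm_apply_le_l2_opNorm {m : Type*} [Fintype m] (A : Matrix m n ℂ) (i : m) (j : n) :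
    ‖A i j‖ ≤ ‖A‖ := by
  have h := l2_opNorm_mulVec A (EuclideanSpace.single j 1)
  rw [PiLp.norm_single, norm_one, mul_one] at h
  refine le_trans ?_ h
  simpa using
    PiLp.norm_apply_le ((EuclideanSpace.equiv m ℂ).symm (A *ᵥ EuclideanSpace.single j 1)) i

lemma inv_le_inv_of_le {A B : Matrix n n ℂ} (hA : A.PosDef) (h : A ≤ B) : B⁻¹ ≤ A⁻¹ := by
  have hB : B.PosDef := by simpa using hA.add_posSemidef h
  simpa [coe_units_inv] using
    CStarAlgebra.inv_le_inv (a := hA.isUnit.unit) (b := hB.isUnit.unit) hA.posSemidef.nonneg h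

lemma inv_smul_one {r : ℝ} (hr : r ≠ 0) : (r • (1 : Matrix n n ℂ))⁻¹ = r⁻¹ • 1 :=
  inv_eq_right_inv (by rw [smul_mul_smul, one_mul, mul_inv_cancel₀ hr, one_smul])

lemma inv_le_smul_one_of_smul_one_le {B : Matrix n n ℂ} {r : ℝ} (hr : 0 < r)
    (h : r • 1 ≤ B) : B⁻¹ ≤ r⁻¹ • 1 := by
  simpa [inv_smul_one hr.ne'] using inv_le_inv_of_le (PosDef.one.smul hr) h

lemma smul_one_le_inv_of_le_smul_one {B : Matrix n n ℂ} (hB : B.PosDef) {r : ℝ} (hr : 0 < r)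
    (h : B ≤ r • 1) : r⁻¹ • 1 ≤ B⁻¹ := by
  simpa [inv_smul_one hr.ne'] using inv_le_inv_of_le hB h

lemma norm_inv_le_of_smul_one_le {B : Matrix n n ℂ} {r : ℝ} (hr : 0 < r)
    (h : r • 1 ≤ B) : ‖B⁻¹‖ ≤ r⁻¹ := by
  have hB : B.PosDef := by simpa using (PosDef.one.smul hr).add_posSemidef h
  rw [CStarAlgebra.norm_le_iff_le_algebraMap _ (inv_nonneg.mpr hr.le) hB.inv.posSemidef.nonneg,
    Algebra.algebraMap_eq_smul_one]
  exact inv_le_smul_one_of_smul_one_le hr h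

end OperatorNorm

lemma posDef_smul_one_add {n : Type*} [DecidableEq n] {A : Matrix n n ℂ} (hA : A.PosSemidef)
    {r : ℝ} (hr : 0 < r) : ((r : ℂ) • 1 + A).PosDef := by
  rw [Complex.coe_smul]; exact (PosDef.one.smul hr).add_posSemidef hA

section RegularizedGram
variable {n : Type*} [Fintype n] [DecidableEq n]

lemma inv_smul_one_add_mul_sub_one {T : Matrix n n ℂ} (hT : T.PosSemidef) {r : ℝ} (hr : 0 < r) :
    ((r : ℂ) • 1 + T)⁻¹ * T - 1 = -((r : ℂ) • ((r : ℂ) • 1 + T)⁻¹) := by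
  have h := (isUnit_iff_isUnit_det _).mp (posDef_smul_one_add hT hr).isUnit
  calc ((r : ℂ) • 1 + T)⁻¹ * T - 1
      = ((r : ℂ) • 1 + T)⁻¹ * T - ((r : ℂ) • 1 + T)⁻¹ * ((r : ℂ) • 1 + T) := by
        rw [nonsing_inv_mul _ h]
    _ = _ := by rw [Matrix.mul_add, Matrix.mul_smul, Matrix.mul_one]; abel

lemma conjTranspose_mul_inv_mul_eq {m : Type*} [Fintype m] [DecidableEq m] (H : Matrix m n ℂ)
    {r : ℝ} (hr : 0 < r) :
    Hᴴ * ((r : ℂ) • 1 + H * Hᴴ)⁻¹ * H = ((r : ℂ) • 1 + Hᴴ * H)⁻¹ * (Hᴴ * H) := by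
  have h₀ := (isUnit_iff_isUnit_det _).mp
    (posDef_smul_one_add (posSemidef_self_mul_conjTranspose H) hr).isUnit
  have h₁ := (isUnit_iff_isUnit_det _).mp
    (posDef_smul_one_add (posSemidef_conjTranspose_mul_self H) hr).isUnit
  have hcomm : ((r : ℂ) • 1 + Hᴴ * H) * Hᴴ = Hᴴ * ((r : ℂ) • 1 + H * Hᴴ) := by
    simp only [Matrix.add_mul, Matrix.mul_add, Matrix.smul_mul, Matrix.mul_smul, Matrix.one_mul,
      Matrix.mul_one, Matrix.mul_assoc]
  calc Hᴴ * ((r : ℂ) • 1 + H * Hᴴ)⁻¹ * H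
      = ((r : ℂ) • 1 + Hᴴ * H)⁻¹ * (((r : ℂ) • 1 + Hᴴ * H) * Hᴴ) *
          ((r : ℂ) • 1 + H * Hᴴ)⁻¹ * H := by
        rw [← Matrix.mul_assoc, nonsing_inv_mul _ h₁, Matrix.one_mul]
    _ = ((r : ℂ) • 1 + Hᴴ * H)⁻¹ * (Hᴴ * H) := by
        rw [hcomm, ← Matrix.mul_assoc, Matrix.mul_assoc _ ((r : ℂ) • 1 + H * Hᴴ),
          mul_nonsing_inv _ h₀, Matrix.mul_one, Matrix.mul_assoc]

end RegularizedGram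

end Matrix

section LMMSE
variable {m n : Type*} [Fintype m] [Fintype n] [DecidableEq n]

/-- The error covariance of the LMMSE estimate of `x` from `H x + w`, for `x` and `w` white
with variances `1` and `N₀`. -/
noncomputable def lmmseErrorCov (H : Matrix m n ℂ) (N₀ : ℝ) : Matrix n n ℂ :=
  (N₀ : ℂ) • ((N₀ : ℂ) • 1 + Hᴴ * H)⁻¹

lemma conjTranspose_mul_inv_mul_sub_one [DecidableEq m] (H : Matrix m n ℂ) {N₀ : ℝ}
    (hN₀ : 0 < N₀) : Hᴴ * ((N₀ : ℂ) • 1 + H * Hᴴ)⁻¹ * H - 1 = -lmmseErrorCov H N₀ := by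
  rw [conjTranspose_mul_inv_mul_eq H hN₀,
    inv_smul_one_add_mul_sub_one (posSemidef_conjTranspose_mul_self H) hN₀, lmmseErrorCov]

open scoped MatrixOrder Matrix.Norms.L2Operator

lemma smul_one_le_lmmseErrorCov (H : Matrix m n ℂ) {N₀ : ℝ} (hN₀ : 0 < N₀) :
    (N₀ / (N₀ + ‖Hᴴ * H‖)) • 1 ≤ lmmseErrorCov H N₀ := by
  have hT := posSemidef_conjTranspose_mul_self H
  have hS : (N₀ : ℂ) • 1 + Hᴴ * H ≤ (N₀ + ‖Hᴴ * H‖) • 1 := by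
    rw [add_smul, Complex.coe_smul]
    gcongr
    simpa [Algebra.algebraMap_eq_smul_one] using
      IsSelfAdjoint.le_algebraMap_norm_self hT.isHermitian.isSelfAdjoint
  have := smul_le_smul_of_nonneg_left
    (smul_one_le_inv_of_le_smul_one (posDef_smul_one_add hT hN₀) (by positivity) hS) hN₀.le
  rwa [smul_smul, ← div_eq_mul_inv, ← Complex.coe_smul] at this

lemma norm_lmmseErrorCov_le (H : Matrix m n ℂ) (hH : (Hᴴ * H).PosDef) {N₀ : ℝ} (hN₀ : 0 < N₀) :
    ‖lmmseErrorCov H N₀‖ ≤ N₀ * ‖(Hᴴ * H)⁻¹‖ := by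
  have hS := posDef_smul_one_add hH.posSemidef hN₀
  have hle : ((N₀ : ℂ) • 1 + Hᴴ * H)⁻¹ ≤ (Hᴴ * H)⁻¹ := by
    refine inv_le_inv_of_le hH ?_
    rw [le_iff, add_sub_cancel_right, Complex.coe_smul]
    exact PosSemidef.one.smul hN₀.le
  rw [lmmseErrorCov, norm_smul, Complex.norm_real, Real.norm_of_nonneg hN₀.le]
  gcongr
  exact CStarAlgebra.norm_le_norm_of_nonneg_of_le hS.inv.posSemidef.nonneg hle

lemma norm_one_sub_lmmseErrorCov_le (H : Matrix m n ℂ) {N₀ : ℝ} (hN₀ : 0 < N₀) :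
    ‖1 - lmmseErrorCov H N₀‖ ≤ ‖Hᴴ * H‖ / N₀ := by
  have hT := posSemidef_conjTranspose_mul_self H
  have h := inv_smul_one_add_mul_sub_one hT hN₀
  rw [← lmmseErrorCov] at h
  have hS : N₀ • 1 ≤ (N₀ : ℂ) • 1 + Hᴴ * H := by
    rw [le_iff, Complex.coe_smul, add_sub_cancel_left]; exact hT
  rw [sub_eq_add_neg, ← h, add_sub_cancel, div_eq_inv_mul]
  exact (norm_mul_le _ _).trans (by gcongr; exact norm_inv_le_of_smul_one_le hN₀ hS)

lemma exists_lmmse_bounds [DecidableEq m] (H : Matrix m n ℂ) (hH : (Hᴴ * H).PosDef)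
    (M : ℝ → Matrix n n ℂ) (hM : ∀ N₀ : ℝ, M N₀ = Hᴴ * ((N₀ : ℂ) • 1 + H * Hᴴ)⁻¹ * H - 1) :
    ∃ c τ : ℝ, 0 ≤ c ∧ ∀ N₀ : ℝ, 0 < N₀ → (N₀ / (N₀ + c)) • 1 ≤ -M N₀ ∧
      ∀ k ℓ, k ≠ ℓ → ‖M N₀ k ℓ‖ ≤ N₀ * τ ∧ ‖M N₀ k ℓ‖ ≤ c / N₀ := by
  refine ⟨‖Hᴴ * H‖, ‖(Hᴴ * H)⁻¹‖, norm_nonneg _, fun N₀ hN₀ => ?_⟩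
  simp only [hM, conjTranspose_mul_inv_mul_sub_one H hN₀, neg_neg, Matrix.neg_apply, norm_neg]
  refine ⟨smul_one_le_lmmseErrorCov H hN₀, fun k ℓ hkl =>
    ⟨(norm_apply_le_l2_opNorm _ k ℓ).trans (norm_lmmseErrorCov_le H hH hN₀), ?_⟩⟩
  have := (norm_apply_le_l2_opNorm (1 - lmmseErrorCov H N₀) k ℓ).trans
    (norm_one_sub_lmmseErrorCov_le H hN₀)
  rwa [Matrix.sub_apply, one_apply_ne hkl, zero_sub, norm_neg] at this

end LMMSE

section GMI

lemma bandPart_neg {K ν : ℕ} (A : Matrix (Fin K) (Fin K) ℂ) :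
    bandPart ν (-A) = -bandPart ν A := by
  ext k ℓ
  by_cases h : |((k : ℕ) : ℤ) - ((ℓ : ℕ) : ℤ)| ≤ (ν : ℤ) <;> simp [bandPart, h]

lemma trace_mul_eq_of_bandPart_eq {K ν : ℕ} {W X Y : Matrix (Fin K) (Fin K) ℂ}
    (hW : ∀ k ℓ : Fin K, |((k : ℕ) : ℤ) - ((ℓ : ℕ) : ℤ)| > (ν : ℤ) → W k ℓ = 0)
    (hXY : bandPart ν X = bandPart ν Y) : (W * X).trace = (W * Y).trace := by
  simp only [trace, diag, mul_apply]
  refine Finset.sum_congr rfl fun k _ => Finset.sum_congr rfl fun ℓ _ => ?_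
  by_cases hband : |((ℓ : ℕ) : ℤ) - ((k : ℕ) : ℤ)| ≤ (ν : ℤ)
  · have := congrFun (congrFun hXY ℓ) k
    simp only [bandPart, of_apply, if_pos hband] at this
    rw [this]
  · rw [hW k ℓ (by rwa [abs_sub_comm, gt_iff_lt, ← not_le]), zero_mul, zero_mul]

open scoped MatrixOrder

lemma smul_one_le_inv_one_add_of_bandPart_eq {K ν : ℕ} (hK : 0 < K)
    {G E : Matrix (Fin K) (Fin K) ℂ}
    (hGband : ∀ k ℓ : Fin K, |((k : ℕ) : ℤ) - ((ℓ : ℕ) : ℤ)| > (ν : ℤ) → G k ℓ = 0)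
    (hG : (1 + G).PosDef) (hinv : bandPart ν (1 + G)⁻¹ = bandPart ν E)
    {m : ℝ} (hm : 0 < m) (hE : m • 1 ≤ E) :
    (m / K) • 1 ≤ (1 + G)⁻¹ := by
  have hband : ∀ k ℓ : Fin K, |((k : ℕ) : ℤ) - ((ℓ : ℕ) : ℤ)| > (ν : ℤ) → (1 + G) k ℓ = 0 := by
    intro k ℓ hkl
    have hne : k ≠ ℓ := by rintro rfl; simp at hkl; omega
    rw [Matrix.add_apply, one_apply_ne hne, hGband k ℓ hkl, add_zero]
  have htrace : ((1 + G) * E).trace = K := by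
    rw [← trace_mul_eq_of_bandPart_eq hband hinv,
      mul_nonsing_inv _ ((isUnit_iff_isUnit_det _).mp hG.isUnit), trace_one, Fintype.card_fin]
  have hmtr : m * (1 + G).trace.re ≤ K := by
    have := re_trace_mul_le_of_le hG.posSemidef.nonneg hE
    rwa [htrace, Matrix.mul_smul, Matrix.mul_one, trace_smul, Complex.real_smul,
      Complex.re_ofReal_mul, Complex.natCast_re] at this
  have hle : 1 + G ≤ ((K : ℝ) / m) • 1 :=
    hG.posSemidef.le_trace_smul_one.trans <|
      smul_le_smul_of_nonneg_right (by rwa [le_div_iff₀' hm]) zero_le_one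
  simpa using smul_one_le_inv_of_le_smul_one hG (by positivity) hle

lemma smul_one_le_neg_diagonal_mul_one_add_mul_diagonal_sub {n : Type*} [Fintype n]
    [DecidableEq n] {p : n → ℝ} {c₀ : ℝ} (hp : ∀ k, c₀ ≤ p k - p k ^ 2) {M : Matrix n n ℂ}
    (hM : M ≤ 0) :
    c₀ • 1 ≤ -(diagonal (fun k => (p k : ℂ)) * (1 + M) * diagonal (fun k => (p k : ℂ))
      - diagonal (fun k => (p k : ℂ))) := by
  set D := diagonal (fun k => (p k : ℂ))
  have hD : IsSelfAdjoint D := by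
    simp [D, IsSelfAdjoint, star_eq_conjTranspose, diagonal_conjTranspose]
  have hdiag : c₀ • 1 ≤ D - D * D := by
    have hD2 : D - D * D - c₀ • 1 = diagonal fun k => ((p k - p k ^ 2 - c₀ : ℝ) : ℂ) := by
      ext i j; by_cases h : i = j <;> simp [D, h, sq]
    rw [le_iff, hD2]
    exact PosSemidef.diagonal fun k => Complex.zero_le_real.mpr (by linarith [hp k])
  have hconj : 0 ≤ D * -M * D := hD.conjugate_nonneg (neg_nonneg.mpr hM)
  calc c₀ • 1 ≤ D - D * D := hdiag
    _ ≤ D - D * D + D * -M * D := le_add_of_nonneg_right hconj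
    _ = _ := by noncomm_ring

lemma gmi_objective_le {n : Type*} [Fintype n] [DecidableEq n] {A N B R : Matrix n n ℂ}
    {α c₀ b : ℝ} (hα : 0 < α) (hc₀ : 0 < c₀) (hA : α • 1 ≤ A) (hN : c₀ • 1 ≤ -N)
    (hB : ∀ k ℓ, k ≠ ℓ → ‖B k ℓ‖ ≤ b) (hR : ∀ k, R k k = 0) :
    2 * (B * R).trace.re + (A * R * N * Rᴴ).trace.re ≤
      Fintype.card n ^ 2 * b ^ 2 / (α * c₀) := by
  have hA0 : 0 ≤ A := (smul_nonneg hα.le zero_le_one).trans hA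
  have hRR : 0 ≤ R * Rᴴ := (posSemidef_self_mul_conjTranspose R).nonneg
  have hN' : c₀ * (A * (R * Rᴴ)).trace.re ≤ -(A * R * N * Rᴴ).trace.re := by
    have := re_trace_mul_le_of_le hA0 (star_right_conjugate_le_conjugate hN R)
    have e : A * (R * -N * star R) = -(A * R * N * Rᴴ) := by noncomm_ring
    rwa [e, Matrix.mul_smul, Matrix.mul_one, Matrix.smul_mul, Matrix.mul_smul, trace_smul,
      trace_neg, Complex.neg_re, Complex.real_smul, Complex.re_ofReal_mul] at this
  have hA' : α * (Rᴴ * R).trace.re ≤ (A * (R * Rᴴ)).trace.re := by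
    have := re_trace_mul_le_of_le hRR hA
    rwa [Matrix.mul_smul, Matrix.mul_one, trace_smul, trace_mul_comm R, trace_mul_comm (R * Rᴴ),
      Complex.real_smul, Complex.re_ofReal_mul] at this
  have hBR := two_mul_re_trace_mul_le (mul_pos hα hc₀) hB hR
  nlinarith [mul_le_mul_of_nonneg_left hA' hc₀.le]

lemma gmi_increment_mem_Icc {K ν : ℕ} (hK : 0 < K) {p : Fin K → ℝ} {c₀ m b : ℝ}
    (hp : ∀ k, 0 < p k ∧ p k < 1) (hc₀ : 0 < c₀) (hc₀p : ∀ k, c₀ ≤ p k - p k ^ 2) (hm : 0 < m)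
    {S : Set (Fin K × Fin K)} (hS : ∀ k : Fin K, (k, k) ∉ S) {G M P Mt : Matrix (Fin K) (Fin K) ℂ}
    (hGband : ∀ k ℓ : Fin K, |((k : ℕ) : ℤ) - ((ℓ : ℕ) : ℤ)| > (ν : ℤ) → G k ℓ = 0)
    (hG : (1 + G).PosDef) (hinv : bandPart ν (1 + G)⁻¹ = -bandPart ν M)
    (hM : m • 1 ≤ -M) (hMb : ∀ k ℓ, k ≠ ℓ → ‖M k ℓ‖ ≤ b)
    (hP : P = diagonal fun k => ((p k : ℝ) : ℂ)) (hMt : Mt = P * (1 + M) * P - P) {δ : ℝ}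
    (hδ : δ = sSup {r : ℝ | ∃ R : Matrix (Fin K) (Fin K) ℂ,
      (∀ k ℓ : Fin K, (k, ℓ) ∉ S → R k ℓ = 0) ∧
      r = 2 * (P * M * R).trace.re + ((1 + G)⁻¹ * R * Mt * Rᴴ).trace.re}) :
    δ ∈ Set.Icc 0 (K ^ 3 * b ^ 2 / (m * c₀)) := by
  have hA := smul_one_le_inv_one_add_of_bandPart_eq hK hGband hG
    (by rw [hinv, ← bandPart_neg]) hm hM
  have hN : c₀ • 1 ≤ -Mt := hMt ▸ hP ▸
    smul_one_le_neg_diagonal_mul_one_add_mul_diagonal_sub hc₀p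
      (neg_nonneg.mp ((smul_nonneg hm.le zero_le_one).trans hM))
  have hPM : ∀ k ℓ, k ≠ ℓ → ‖(P * M) k ℓ‖ ≤ b := fun k ℓ hkl => by
    rw [hP, diagonal_mul, norm_mul, Complex.norm_real, Real.norm_of_nonneg (hp k).1.le]
    exact (mul_le_of_le_one_left (norm_nonneg _) (hp k).2.le).trans (hMb k ℓ hkl)
  have hobj : ∀ R : Matrix (Fin K) (Fin K) ℂ, (∀ k ℓ : Fin K, (k, ℓ) ∉ S → R k ℓ = 0) →
      2 * (P * M * R).trace.re + ((1 + G)⁻¹ * R * Mt * Rᴴ).trace.re ≤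
        K ^ 3 * b ^ 2 / (m * c₀) := fun R hR => by
    have := gmi_objective_le (by positivity) hc₀ hA hN hPM fun k => hR k k (hS k)
    rw [Fintype.card_fin] at this
    exact this.trans_eq (by field_simp)
  have hzero : 2 * (P * M * 0).trace.re + ((1 + G)⁻¹ * 0 * Mt * 0ᴴ).trace.re = 0 := by simp
  rw [hδ]
  refine ⟨le_csSup ⟨K ^ 3 * b ^ 2 / (m * c₀), ?_⟩ ⟨0, fun _ _ _ => rfl, hzero.symm⟩,
    csSup_le ⟨0, 0, fun _ _ _ => rfl, hzero.symm⟩ ?_⟩ <;>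
    rintro _ ⟨R, hR, rfl⟩ <;> exact hobj R hR

end GMI

theorem gmi_increment_snr_asymptotics_general {N K : ℕ} (hK : 1 ≤ K)
    (H : Matrix (Fin N) (Fin K) ℂ) (hinv : IsUnit (Hᴴ * H))
    (p : Fin K → ℝ) (hp : ∀ k, 0 < p k ∧ p k < 1)
    (P : Matrix (Fin K) (Fin K) ℂ) (hP : P = Matrix.diagonal fun k => ((p k : ℝ) : ℂ))
    (ν : ℕ) (S : Set (Fin K × Fin K)) (hS : ∀ k : Fin K, (k, k) ∉ S)
    (M Mt : ℝ → Matrix (Fin K) (Fin K) ℂ)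
    (hM : ∀ N₀ : ℝ, M N₀ = Hᴴ * ((N₀ : ℂ) • 1 + H * Hᴴ)⁻¹ * H - 1)
    (hMt : ∀ N₀ : ℝ, Mt N₀ = P * (1 + M N₀) * P - P)
    (G : ℝ → Matrix (Fin K) (Fin K) ℂ)
    (hG : ∀ N₀ : ℝ, 0 < N₀ →
      (G N₀).IsHermitian ∧
      (∀ k ℓ : Fin K, |((k : ℕ) : ℤ) - ((ℓ : ℕ) : ℤ)| > (ν : ℤ) → G N₀ k ℓ = 0) ∧
      (1 + G N₀).PosDef ∧
      bandPart ν (1 + G N₀)⁻¹ = -(bandPart ν (M N₀)))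
    (δ₂ : ℝ → ℝ)
    (hδ₂ : ∀ N₀ : ℝ, δ₂ N₀ = sSup {r : ℝ | ∃ R : Matrix (Fin K) (Fin K) ℂ,
      (∀ k ℓ : Fin K, (k, ℓ) ∉ S → R k ℓ = 0) ∧
      r = 2 * (Matrix.trace (P * M N₀ * R)).re
        + (Matrix.trace ((1 + G N₀)⁻¹ * R * Mt N₀ * Rᴴ)).re}) :
    (∀ N₀ : ℝ, 0 < N₀ → 0 ≤ δ₂ N₀) ∧
      δ₂ =O[𝓝[>] (0 : ℝ)] (fun N₀ => N₀) ∧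
      δ₂ =O[atTop] (fun N₀ => 1 / N₀ ^ 2) := by
  have : Nonempty (Fin K) := ⟨⟨0, hK⟩⟩
  obtain ⟨c₀, hc₀, hc₀p⟩ := Finite.exists_pos_le_sub_sq hp
  obtain ⟨c, τ, hc, hE⟩ := exists_lmmse_bounds H
    ((posSemidef_conjTranspose_mul_self H).posDef_iff_isUnit.mpr hinv) M hM
  have hδ : ∀ N₀ > 0, ∀ b, (∀ k ℓ, k ≠ ℓ → ‖M N₀ k ℓ‖ ≤ b) →
      δ₂ N₀ ∈ Set.Icc 0 (K ^ 3 * b ^ 2 / (N₀ / (N₀ + c) * c₀)) := fun N₀ hN₀ b hb => by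
    obtain ⟨-, hGband, hGpd, hGinv⟩ := hG N₀ hN₀
    exact gmi_increment_mem_Icc hK hp hc₀ hc₀p (by positivity) hS hGband hGpd hGinv
      (hE N₀ hN₀).1 hb hP (hMt N₀) (hδ₂ N₀)
  have hδ₀ (x : ℝ) (hx : 0 < x) :=
    hδ x hx (x * τ) fun k ℓ hkl => ((hE x hx).2 k ℓ hkl).1
  have hδtop (x : ℝ) (hx : 0 < x) :=
    hδ x hx (c / x) fun k ℓ hkl => ((hE x hx).2 k ℓ hkl).2
  refine ⟨fun N₀ hN₀ => (hδ₀ N₀ hN₀).1, ?_, ?_⟩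
  · refine IsBigO.of_bound (K ^ 3 * τ ^ 2 * (1 + c) / c₀) ?_
    filter_upwards [Ioc_mem_nhdsGT one_pos] with x ⟨hx0, hx1⟩
    rw [Real.norm_of_nonneg (hδ₀ x hx0).1, Real.norm_of_nonneg hx0.le]
    calc δ₂ x ≤ K ^ 3 * (x * τ) ^ 2 / (x / (x + c) * c₀) := (hδ₀ x hx0).2
      _ = K ^ 3 * τ ^ 2 * (x + c) / c₀ * x := by field_simp
      _ ≤ K ^ 3 * τ ^ 2 * (1 + c) / c₀ * x := by gcongr
  · refine IsBigO.of_bound (K ^ 3 * c ^ 2 * (1 + c) / c₀) ?_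
    filter_upwards [eventually_ge_atTop 1] with x hx1
    have hx0 : 0 < x := one_pos.trans_le hx1
    rw [Real.norm_of_nonneg (hδtop x hx0).1, Real.norm_of_nonneg (by positivity)]
    calc δ₂ x ≤ K ^ 3 * (c / x) ^ 2 / (x / (x + c) * c₀) := (hδtop x hx0).2
      _ = K ^ 3 * c ^ 2 * ((x + c) / x) / c₀ * (1 / x ^ 2) := by field_simp
      _ ≤ K ^ 3 * c ^ 2 * (1 + c) / c₀ * (1 / x ^ 2) := by
          gcongr
          rw [div_le_iff₀ hx0]; nlinarith

/-- Lemma 4 of the paper. The GMI increment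
`δ₂(N₀) = sup_R { 2 Re Tr(P M(N₀) R) + Tr((I+G(N₀))⁻¹ R M̃(N₀) Rᴴ) }` (supremum over `R`
supported on an off-diagonal set `𝒮`), evaluated at the optimal banded `G(N₀)`, is
nonnegative and satisfies `δ₂(N₀) = O(N₀)` as `N₀ → 0⁺` and `δ₂(N₀) = O(1/N₀²)` as
`N₀ → ∞`. -/
theorem gmi_increment_snr_asymptotics {N K : ℕ} (hK : 1 ≤ K)
    (H : Matrix (Fin N) (Fin K) ℂ) (hinv : IsUnit (Hᴴ * H))
    (p : Fin K → ℝ) (hp : ∀ k, 0 < p k ∧ p k < 1)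
    (P : Matrix (Fin K) (Fin K) ℂ) (hP : P = Matrix.diagonal fun k => ((p k : ℝ) : ℂ))
    (hPne : P ≠ 0)
    (ν : ℕ) (S : Set (Fin K × Fin K)) (hS : ∀ k : Fin K, (k, k) ∉ S)
    (M Mt : ℝ → Matrix (Fin K) (Fin K) ℂ)
    (hM : ∀ N₀ : ℝ, M N₀ = Hᴴ * ((N₀ : ℂ) • 1 + H * Hᴴ)⁻¹ * H - 1)
    (hMt : ∀ N₀ : ℝ, Mt N₀ = P * (1 + M N₀) * P - P)
    (G : ℝ → Matrix (Fin K) (Fin K) ℂ)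
    (hG : ∀ N₀ : ℝ, 0 < N₀ →
      (G N₀).IsHermitian ∧
      (∀ k ℓ : Fin K, |((k : ℕ) : ℤ) - ((ℓ : ℕ) : ℤ)| > (ν : ℤ) → G N₀ k ℓ = 0) ∧
      (1 + G N₀).PosDef ∧
      bandPart ν (1 + G N₀)⁻¹ = -(bandPart ν (M N₀)))
    (δ₂ : ℝ → ℝ)
    (hδ₂ : ∀ N₀ : ℝ, δ₂ N₀ = sSup {r : ℝ | ∃ R : Matrix (Fin K) (Fin K) ℂ,
      (∀ k ℓ : Fin K, (k, ℓ) ∉ S → R k ℓ = 0) ∧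
      r = 2 * (Matrix.trace (P * M N₀ * R)).re
        + (Matrix.trace ((1 + G N₀)⁻¹ * R * Mt N₀ * Rᴴ)).re}) :
    (∀ N₀ : ℝ, 0 < N₀ → 0 ≤ δ₂ N₀) ∧
      δ₂ =O[𝓝[>] (0 : ℝ)] (fun N₀ => N₀) ∧
      δ₂ =O[atTop] (fun N₀ => 1 / N₀ ^ 2) :=
  gmi_increment_snr_asymptotics_general hK H hinv p hp P hP ν S hS M Mt hM hMt G hG δ₂ hδ₂
end
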